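/- arXiv:2006.11265 — 5 statements merged into one kernel-verified Lean document; each statement's English description precedes it below -/
import Mathlib

section
/- The Winkler asymmetric quadratic score for binary outcomes is strictly proper: for every asymmetry level c ∈ (0,1), every true probability q ∈ (0,1), and every forecast p ∈ [0,1] with p ≠ q, one has ((q-c)² - (q-q)²)/w(q) > ((q-c)² - (q-p)²)/w(p), i.e. (q-c)²/w(q) > ((q-c)² - (q-p)²)/w(p), where w(x) = (1-c)² if x > c and w(x) = c² if x ≤ c. -/
/-- The Winkler asymmetric quadratic score for binary outcomes is strictly proper. -/
theorem winkler_strictly_proper (c q p : ℝ) (hc : c ∈ Set.Ioo (0:ℝ) 1)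
    (hq : q ∈ Set.Ioo (0:ℝ) 1) (hp : p ∈ Set.Icc (0:ℝ) 1) (hne : p ≠ q) :
    (q - c)^2 / (if c < q then (1 - c)^2 else c^2)
      > ((q - c)^2 - (q - p)^2) / (if c < p then (1 - c)^2 else c^2) := by
  obtain ⟨hc0, hc1⟩ := hc
  obtain ⟨hq0, hq1⟩ := hq
  obtain ⟨hp0, hp1⟩ := hp
  have h1c : (0:ℝ) < (1 - c)^2 := by nlinarith
  have hc2 : (0:ℝ) < c^2 := by positivity
  have hpq : (0:ℝ) < (q - p)^2 := by
    have : q - p ≠ 0 := fun h => hne (by linarith)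
    positivity
  by_cases hcq : c < q <;> by_cases hcp : c < p <;>
    simp only [hcq, hcp, if_true, if_false] <;>
    rw [gt_iff_lt, div_lt_div_iff₀ (by positivity) (by positivity)]
  · nlinarith
  · -- c < q, p ≤ c : (q-p) ≥ (q-c) > 0
    push_neg at hcp
    have h1 : (q - c)^2 ≤ (q - p)^2 := by nlinarith
    have h2 : 0 < (q - c)^2 := by
      have : q - c ≠ 0 := by intro h; linarith
      positivity
    nlinarith
  · -- q ≤ c < p
    push_neg at hcq
    have h1 : (q - c)^2 < (q - p)^2 := by nlinarith [mul_pos (sub_pos.2 hcp) (sub_pos.2 hcp)]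
    nlinarith
  · nlinarith
end

section
/- The pointwise expected ACPS integrand is uniquely maximized by the true CDF value: fix c ∈ (0,1) and let π ∈ (0,1) be the true probability that the observation y falls in (-∞, u]. Define for x ∈ [0,1] the function f(x) = π·(c² - x²)·h(x) + (1-π)·((1-c)² - (1-x)²)·h(x), where h(x) = 1/(1-c)² if x > c and h(x) = 1/c² if x ≤ c. Then f(x) < f(π) for all x ≠ π. -/
/-- The pointwise expected ACPS integrand is uniquely maximized by the true CDF value. -/
theorem acps_integrand_proper (c π : ℝ) (hc : c ∈ Set.Ioo (0:ℝ) 1)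
    (hπ : π ∈ Set.Ioo (0:ℝ) 1) (f : ℝ → ℝ)
    (hf : ∀ x, f x = π * ((1 - c)^2 - (1 - x)^2)
        * (if c < x then 1 / (1 - c)^2 else 1 / c^2)
      + (1 - π) * (c^2 - x^2) * (if c < x then 1 / (1 - c)^2 else 1 / c^2)) :
    ∀ x ∈ Set.Icc (0:ℝ) 1, x ≠ π → f x < f π := by
  obtain ⟨hc0, hc1⟩ := hc
  obtain ⟨hp0, hp1⟩ := hπ
  intro x hx hxπ
  obtain ⟨hx0, hx1⟩ := hx
  have hne : x - π ≠ 0 := sub_ne_zero.mpr hxπ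
  have hsq : (0:ℝ) < (x - π)^2 := by positivity
  have hK1 : (0:ℝ) < 1 / c^2 := by positivity
  have hK2 : (0:ℝ) < 1 / (1 - c)^2 := by
    have : (0:ℝ) < 1 - c := by linarith
    positivity
  rw [hf x, hf π]
  by_cases h1 : c < x <;> by_cases h2 : c < π <;>
      simp only [h1, h2, if_true, if_false]
  · -- both > c : same denominator, diff = (x-π)² / (1-c)²
    nlinarith [mul_pos hsq hK2]
  · -- π ≤ c < x : f x < 0 ≤ f π
    push_neg at h2
    nlinarith [mul_pos (mul_pos (sub_pos.mpr h1) (by linarith : (0:ℝ) < x + c - 2*π)) hK2,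
      mul_nonneg (sq_nonneg (c - π)) hK1.le]
  · -- x ≤ c < π : f x ≤ 0 < f π
    push_neg at h1
    nlinarith [mul_pos (mul_pos (sub_pos.mpr h2) (sub_pos.mpr h2)) hK2,
      mul_nonneg (mul_nonneg (sub_nonneg.mpr h1) (by linarith : (0:ℝ) ≤ 2*π - x - c)) hK1.le]
  · -- both ≤ c
    nlinarith [mul_pos hsq hK1]
end

section
/- The ACPS is strictly proper on a bounded interval: let c ∈ (0,1), let Q be the CDF of a probability measure μ on a bounded interval [a,b] with Q(u) ∈ (0,1) for all u ∈ (a,b), and let P be any measurable function [a,b] → [0,1] (a candidate forecast CDF). Then ∫_{[a,b]} E_{y∼μ}[s_c(P(u), 𝟙{y ≤ u})] du ≤ ∫_{[a,b]} E_{y∼μ}[s_c(Q(u), 𝟙{y ≤ u})] du, with equality only if P(u) = Q(u) for Lebesgue-almost-every u ∈ [a,b], where s_c(x, 1) = ((1-c)² - (1-x)²)·h(x), s_c(x, 0) = (c² - x²)·h(x), and h(x) = 1/(1-c)² if x > c, h(x) = 1/c² if x ≤ c. -/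
open MeasureTheory

noncomputable def Sval (c x q : ℝ) : ℝ :=
  (if c < x then 1/(1-c)^2 else 1/c^2) * ((c-q)^2 - (x-q)^2)

lemma Sval_le (c x q : ℝ) (hc0 : 0 < c) (hc1 : c < 1) : Sval c x q ≤ Sval c q q := by
  have h1c : (0:ℝ) < 1 - c := by linarith
  have hA : (0:ℝ) < 1/(1-c)^2 := one_div_pos.mpr (pow_pos h1c 2)
  have hB : (0:ℝ) < 1/c^2 := one_div_pos.mpr (pow_pos hc0 2)
  unfold Sval
  split_ifs with h1 h2 h2
  · nlinarith [sq_nonneg (x - q)]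
  · push_neg at h2
    have hL : (c-q)^2 - (x-q)^2 ≤ 0 := by nlinarith
    nlinarith [mul_nonpos_of_nonneg_of_nonpos hA.le hL, mul_nonneg hB.le (sq_nonneg (c-q))]
  · push_neg at h1
    have hL : (c-q)^2 - (x-q)^2 ≤ 0 := by nlinarith
    nlinarith [mul_nonpos_of_nonneg_of_nonpos hB.le hL, mul_nonneg hA.le (sq_nonneg (c-q))]
  · nlinarith [sq_nonneg (x - q)]

lemma Sval_eq (c x q : ℝ) (hc0 : 0 < c) (hc1 : c < 1)
    (heq : Sval c x q = Sval c q q) : x = q := by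
  have h1c : (0:ℝ) < 1 - c := by linarith
  have hA : (0:ℝ) < 1/(1-c)^2 := one_div_pos.mpr (pow_pos h1c 2)
  have hB : (0:ℝ) < 1/c^2 := one_div_pos.mpr (pow_pos hc0 2)
  unfold Sval at heq
  split_ifs at heq with h1 h2 h2
  · have : (x - q)^2 = 0 := by nlinarith
    nlinarith [this]
  · push_neg at h2
    exfalso
    have hL : (c-q)^2 - (x-q)^2 < 0 := by nlinarith
    nlinarith [mul_neg_of_pos_of_neg hA hL, mul_nonneg hB.le (sq_nonneg (c-q))]
  · push_neg at h1
    exfalso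
    have hL : (c-q)^2 - (x-q)^2 ≤ 0 := by nlinarith
    have hR : (0:ℝ) < 1/(1-c)^2 * (c-q)^2 := mul_pos hA (by nlinarith)
    nlinarith [mul_nonpos_of_nonneg_of_nonpos hB.le hL]
  · have : (x - q)^2 = 0 := by nlinarith
    nlinarith [this]

lemma Sval_bound (c x q : ℝ) (hc0 : 0 < c) (hc1 : c < 1)
    (hx : x ∈ Set.Icc (0:ℝ) 1) (hq : q ∈ Set.Icc (0:ℝ) 1) :
    ‖Sval c x q‖ ≤ (1/(1-c)^2 + 1/c^2) * 2 := by
  obtain ⟨hx0, hx1⟩ := hx; obtain ⟨hq0, hq1⟩ := hq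
  have h1c : (0:ℝ) < 1 - c := by linarith
  have hA : (0:ℝ) < 1/(1-c)^2 := one_div_pos.mpr (pow_pos h1c 2)
  have hB : (0:ℝ) < 1/c^2 := one_div_pos.mpr (pow_pos hc0 2)
  have hD : |(c-q)^2 - (x-q)^2| ≤ 2 := by
    rw [abs_le]; constructor <;> nlinarith
  unfold Sval
  rw [Real.norm_eq_abs, abs_mul]
  split_ifs with h1
  · rw [abs_of_pos hA]
    nlinarith [abs_nonneg ((c-q)^2 - (x-q)^2)]
  · rw [abs_of_pos hB]
    nlinarith [abs_nonneg ((c-q)^2 - (x-q)^2)]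

lemma inner_int (μ : Measure ℝ) [IsProbabilityMeasure μ] (A B u : ℝ) :
    (∫ y, (if y ≤ u then A else B) ∂μ) = (A - B) * (μ (Set.Iic u)).toReal + B := by
  have hfun : (fun y => if y ≤ u then A else B)
      = fun y => (Set.Iic u).indicator (fun _ => A - B) y + B := by
    funext y
    by_cases hy : y ≤ u <;> simp [Set.indicator, hy]
  rw [hfun, integral_add ((integrable_const (A - B)).indicator measurableSet_Iic)
      (integrable_const B)]
  rw [integral_indicator_const _ measurableSet_Iic, integral_const]
  simp [mul_comm, measureReal_def]

/-- The ACPS is strictly proper on a bounded interval: the expected score of a forecast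
CDF `P` never exceeds that of the true CDF `Q`, with equality only if `P = Q`
Lebesgue-almost-everywhere on `[a,b]`. -/
theorem acps_strictly_proper_on_interval
    (a b c : ℝ) (hab : a ≤ b) (hc : c ∈ Set.Ioo (0:ℝ) 1)
    (μ : Measure ℝ) [IsProbabilityMeasure μ] (hμ : μ (Set.Icc a b) = 1)
    (Q : ℝ → ℝ) (hQ : ∀ u, Q u = (μ (Set.Iic u)).toReal)
    (hQ01 : ∀ u ∈ Set.Ioo a b, Q u ∈ Set.Ioo (0:ℝ) 1)
    (P : ℝ → ℝ) (hPm : Measurable P) (hP01 : ∀ u, P u ∈ Set.Icc (0:ℝ) 1)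
    (h : ℝ → ℝ) (hh : ∀ x, h x = if c < x then 1 / (1 - c)^2 else 1 / c^2) :
    (∫ u in Set.Icc a b, ∫ y,
        (if y ≤ u then ((1 - c)^2 - (1 - P u)^2) * h (P u)
          else (c^2 - (P u)^2) * h (P u)) ∂μ)
      ≤ (∫ u in Set.Icc a b, ∫ y,
        (if y ≤ u then ((1 - c)^2 - (1 - Q u)^2) * h (Q u)
          else (c^2 - (Q u)^2) * h (Q u)) ∂μ)
    ∧ ((∫ u in Set.Icc a b, ∫ y,
        (if y ≤ u then ((1 - c)^2 - (1 - P u)^2) * h (P u)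
          else (c^2 - (P u)^2) * h (P u)) ∂μ)
      = (∫ u in Set.Icc a b, ∫ y,
        (if y ≤ u then ((1 - c)^2 - (1 - Q u)^2) * h (Q u)
          else (c^2 - (Q u)^2) * h (Q u)) ∂μ) →
      ∀ᵐ u ∂(volume.restrict (Set.Icc a b)), P u = Q u) := by
  obtain ⟨hc0, hc1⟩ := hc
  -- range of Q
  have hQ01' : ∀ u, Q u ∈ Set.Icc (0:ℝ) 1 := by
    intro u
    rw [hQ u]
    refine ⟨ENNReal.toReal_nonneg, ?_⟩
    have h1 : μ (Set.Iic u) ≤ 1 := prob_le_one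
    calc (μ (Set.Iic u)).toReal ≤ (1:ENNReal).toReal :=
          ENNReal.toReal_mono ENNReal.one_ne_top h1
      _ = 1 := ENNReal.toReal_one
  -- Q is monotone hence measurable
  have hQmono : Monotone Q := by
    intro u v huv
    rw [hQ u, hQ v]
    exact ENNReal.toReal_mono (measure_ne_top μ _)
      (measure_mono (Set.Iic_subset_Iic.mpr huv))
  have hQmeas : Measurable Q := hQmono.measurable
  -- rewrite inner integrals
  have hinP : ∀ u, (∫ y,
      (if y ≤ u then ((1 - c)^2 - (1 - P u)^2) * h (P u)
        else (c^2 - (P u)^2) * h (P u)) ∂μ) = Sval c (P u) (Q u) := by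
    intro u
    rw [inner_int μ _ _ u, ← hQ u, hh (P u)]
    unfold Sval
    split_ifs <;> ring
  have hinQ : ∀ u, (∫ y,
      (if y ≤ u then ((1 - c)^2 - (1 - Q u)^2) * h (Q u)
        else (c^2 - (Q u)^2) * h (Q u)) ∂μ) = Sval c (Q u) (Q u) := by
    intro u
    rw [inner_int μ _ _ u, ← hQ u, hh (Q u)]
    unfold Sval
    split_ifs <;> ring
  have hrwP : (∫ u in Set.Icc a b, ∫ y,
      (if y ≤ u then ((1 - c)^2 - (1 - P u)^2) * h (P u)
        else (c^2 - (P u)^2) * h (P u)) ∂μ)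
      = ∫ u in Set.Icc a b, Sval c (P u) (Q u) :=
    integral_congr_ae (Filter.Eventually.of_forall fun u => hinP u)
  have hrwQ : (∫ u in Set.Icc a b, ∫ y,
      (if y ≤ u then ((1 - c)^2 - (1 - Q u)^2) * h (Q u)
        else (c^2 - (Q u)^2) * h (Q u)) ∂μ)
      = ∫ u in Set.Icc a b, Sval c (Q u) (Q u) :=
    integral_congr_ae (Filter.Eventually.of_forall fun u => hinQ u)
  rw [hrwP, hrwQ]
  -- integrability
  haveI : IsFiniteMeasure (volume.restrict (Set.Icc a b)) := by
    constructor
    rw [Measure.restrict_apply_univ, Real.volume_Icc]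
    exact ENNReal.ofReal_lt_top
  have hmeasS : ∀ (f : ℝ → ℝ), Measurable f →
      Measurable (fun u => Sval c (f u) (Q u)) := by
    intro f hf
    unfold Sval
    exact ((Measurable.ite (measurableSet_lt measurable_const hf)
      measurable_const measurable_const).mul
      (((measurable_const.sub hQmeas).pow_const 2).sub
        ((hf.sub hQmeas).pow_const 2)))
  have hintP : Integrable (fun u => Sval c (P u) (Q u))
      (volume.restrict (Set.Icc a b)) := by
    refine ⟨((hmeasS P hPm)).aestronglyMeasurable, ?_⟩
    apply HasFiniteIntegral.of_bounded (C := (1/(1-c)^2 + 1/c^2) * 2)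
    filter_upwards with u using
      Sval_bound c (P u) (Q u) hc0 hc1 (hP01 u) (hQ01' u)
  have hintQ : Integrable (fun u => Sval c (Q u) (Q u))
      (volume.restrict (Set.Icc a b)) := by
    refine ⟨((hmeasS Q hQmeas)).aestronglyMeasurable, ?_⟩
    apply HasFiniteIntegral.of_bounded (C := (1/(1-c)^2 + 1/c^2) * 2)
    filter_upwards with u using
      Sval_bound c (Q u) (Q u) hc0 hc1 (hQ01' u) (hQ01' u)
  constructor
  · exact integral_mono hintP hintQ (fun u => Sval_le c (P u) (Q u) hc0 hc1)
  · intro heq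
    have hnn : 0 ≤ᵐ[volume.restrict (Set.Icc a b)]
        (fun u => Sval c (Q u) (Q u) - Sval c (P u) (Q u)) :=
      Filter.Eventually.of_forall fun u =>
        sub_nonneg.mpr (Sval_le c (P u) (Q u) hc0 hc1)
    have hzero : (∫ u in Set.Icc a b,
        (Sval c (Q u) (Q u) - Sval c (P u) (Q u))) = 0 := by
      rw [integral_sub hintQ hintP]
      linarith
    have hae := (integral_eq_zero_iff_of_nonneg_ae hnn (hintQ.sub hintP)).mp hzero
    filter_upwards [hae] with u hu
    have : Sval c (P u) (Q u) = Sval c (Q u) (Q u) := by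
      have hu' : Sval c (Q u) (Q u) - Sval c (P u) (Q u) = 0 := hu
      linarith
    exact Sval_eq c (P u) (Q u) hc0 hc1 this
end

section
/- The threshold-weighted ACPS is proper: let G be a finite positive measure on ℝ, c ∈ (0,1), Q the CDF of a probability measure μ on ℝ, and P any measurable function ℝ → [0,1]. Then ∫ E_{y∼μ}[s_c(P(u), 𝟙{y ≤ u})] G(du) ≤ ∫ E_{y∼μ}[s_c(Q(u), 𝟙{y ≤ u})] G(du), where s_c(x,1) = ((1-c)² - (1-x)²)·h(x), s_c(x,0) = (c² - x²)·h(x), and h(x) = 1/(1-c)² if x > c, h(x) = 1/c² otherwise. -/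
open MeasureTheory
open scoped ENNReal

/-- Inner integral of a two-valued function against a probability measure. -/
lemma tacps_inner (μ : Measure ℝ) [IsProbabilityMeasure μ] (u a b : ℝ) :
    (∫ y, (if y ≤ u then a else b) ∂μ)
      = a * (μ (Set.Iic u)).toReal + b * (1 - (μ (Set.Iic u)).toReal) := by
  have hfun : (∫ y, (if y ≤ u then a else b) ∂μ)
      = ∫ y, ((Set.Iic u).indicator (fun _ => a - b) y + b) ∂μ :=
    integral_congr_ae (ae_of_all _ fun y => by
      by_cases hy : y ≤ u <;> simp [Set.indicator, hy])
  rw [hfun, integral_add ((integrable_const (a - b)).indicator measurableSet_Iic)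
    (integrable_const b), integral_indicator_const _ measurableSet_Iic, integral_const]
  simp [smul_eq_mul]
  rw [measureReal_def]
  ring

/-- Pointwise properness of the binary Winkler score. -/
lemma tacps_key (c q x : ℝ) (hc0 : 0 < c) (hc1 : c < 1) (hq0 : 0 ≤ q) (hq1 : q ≤ 1)
    (hx0 : 0 ≤ x) (hx1 : x ≤ 1) :
    ((1-c)^2 - (1-x)^2) * (if c < x then 1/(1-c)^2 else 1/c^2) * q
      + (c^2 - x^2) * (if c < x then 1/(1-c)^2 else 1/c^2) * (1 - q)
    ≤ ((1-c)^2 - (1-q)^2) * (if c < q then 1/(1-c)^2 else 1/c^2) * q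
      + (c^2 - q^2) * (if c < q then 1/(1-c)^2 else 1/c^2) * (1 - q) := by
  have hd : (0:ℝ) < 1 - c := by linarith
  have key : ((q-c)^2 - (x-q)^2) * (if c < x then 1/(1-c)^2 else 1/c^2)
      ≤ (q-c)^2 * (if c < q then 1/(1-c)^2 else 1/c^2) := by
    split_ifs with h1 h2 h2
    · exact mul_le_mul_of_nonneg_right (by nlinarith [sq_nonneg (x-q)]) (by positivity)
    · -- q ≤ c < x
      push_neg at h2
      have hle : (q-c)^2 ≤ (x-q)^2 := by
        nlinarith [mul_nonneg (by linarith : (0:ℝ) ≤ x - c)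
          (by linarith : (0:ℝ) ≤ x + c - 2*q)]
      have h0 : ((q-c)^2 - (x-q)^2) * (1/(1-c)^2) ≤ 0 :=
        mul_nonpos_of_nonpos_of_nonneg (by linarith) (by positivity)
      exact h0.trans (by positivity)
    · -- x ≤ c < q
      push_neg at h1
      have hle : (q-c)^2 ≤ (x-q)^2 := by
        nlinarith [mul_nonneg (by linarith : (0:ℝ) ≤ q - x)
          (by linarith : (0:ℝ) ≤ 2*q - x - c)]
      have h0 : ((q-c)^2 - (x-q)^2) * (1/c^2) ≤ 0 :=
        mul_nonpos_of_nonpos_of_nonneg (by linarith) (by positivity)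
      exact h0.trans (by positivity)
    · exact mul_le_mul_of_nonneg_right (by nlinarith [sq_nonneg (x-q)]) (by positivity)
  calc ((1-c)^2 - (1-x)^2) * (if c < x then 1/(1-c)^2 else 1/c^2) * q
      + (c^2 - x^2) * (if c < x then 1/(1-c)^2 else 1/c^2) * (1 - q)
      = ((q-c)^2 - (x-q)^2) * (if c < x then 1/(1-c)^2 else 1/c^2) := by ring
    _ ≤ (q-c)^2 * (if c < q then 1/(1-c)^2 else 1/c^2) := key
    _ = ((1-c)^2 - (1-q)^2) * (if c < q then 1/(1-c)^2 else 1/c^2) * q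
      + (c^2 - q^2) * (if c < q then 1/(1-c)^2 else 1/c^2) * (1 - q) := by ring

/-- Integrability of the expected score as a function of the threshold. -/
lemma tacps_integrable (c : ℝ) (hc0 : 0 < c) (hc1 : c < 1)
    (G : Measure ℝ) [IsFiniteMeasure G]
    (f g : ℝ → ℝ) (hf : Measurable f) (hg : Measurable g)
    (hf01 : ∀ u, f u ∈ Set.Icc (0:ℝ) 1) (hg01 : ∀ u, g u ∈ Set.Icc (0:ℝ) 1) :
    Integrable (fun u =>
      ((1-c)^2 - (1-f u)^2) * (if c < f u then 1/(1-c)^2 else 1/c^2) * g u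
        + (c^2 - (f u)^2) * (if c < f u then 1/(1-c)^2 else 1/c^2) * (1 - g u)) G := by
  have hd : (0:ℝ) < 1 - c := by linarith
  have hHmeas : Measurable fun x : ℝ => if c < x then 1/(1-c)^2 else (1:ℝ)/c^2 :=
    Measurable.ite (measurableSet_lt measurable_const measurable_id)
      measurable_const measurable_const
  have hmeas : Measurable (fun u =>
      ((1-c)^2 - (1-f u)^2) * (if c < f u then 1/(1-c)^2 else 1/c^2) * g u
        + (c^2 - (f u)^2) * (if c < f u then 1/(1-c)^2 else 1/c^2) * (1 - g u)) := by
    apply Measurable.add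
    · exact (((measurable_const.sub ((measurable_const.sub hf).pow measurable_const)).mul
        (hHmeas.comp hf)).mul hg)
    · exact (((measurable_const.sub (hf.pow measurable_const)).mul
        (hHmeas.comp hf)).mul (measurable_const.sub hg))
  apply (integrable_const (2 * (1/(1-c)^2 + 1/c^2))).mono' hmeas.aestronglyMeasurable
  refine ae_of_all _ fun u => ?_
  obtain ⟨hx0, hx1⟩ := hf01 u
  obtain ⟨hq0, hq1⟩ := hg01 u
  set x := f u
  set q := g u
  have heq : ((1-c)^2 - (1-x)^2) * (if c < x then 1/(1-c)^2 else 1/c^2) * q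
      + (c^2 - x^2) * (if c < x then 1/(1-c)^2 else 1/c^2) * (1 - q)
      = ((q-c)^2 - (x-q)^2) * (if c < x then 1/(1-c)^2 else 1/c^2) := by ring
  rw [Real.norm_eq_abs, heq, abs_mul]
  have hB : |(q-c)^2 - (x-q)^2| ≤ 2 := by
    have h1 : (q-c)^2 ≤ 1 := by nlinarith
    have h2 : (x-q)^2 ≤ 1 := by nlinarith
    rw [abs_le]
    constructor <;> nlinarith [sq_nonneg (q-c), sq_nonneg (x-q)]
  have hH : |if c < x then 1/(1-c)^2 else (1:ℝ)/c^2| ≤ 1/(1-c)^2 + 1/c^2 := by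
    split_ifs with h1
    · rw [abs_of_pos (by positivity)]
      have : (0:ℝ) < 1/c^2 := by positivity
      linarith
    · rw [abs_of_pos (by positivity)]
      have : (0:ℝ) < 1/(1-c)^2 := by positivity
      linarith
  calc |(q-c)^2 - (x-q)^2| * |if c < x then 1/(1-c)^2 else (1:ℝ)/c^2|
      ≤ 2 * (1/(1-c)^2 + 1/c^2) :=
        mul_le_mul hB hH (abs_nonneg _) (by norm_num)

/-- The threshold-weighted ACPS is proper: for any finite positive weighting measure `G`,
the expected score of a forecast CDF `P` never exceeds that of the true CDF `Q`. -/
theorem tacps_proper (c : ℝ) (hc : c ∈ Set.Ioo (0:ℝ) 1)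
    (G : Measure ℝ) [IsFiniteMeasure G]
    (μ : Measure ℝ) [IsProbabilityMeasure μ]
    (Q : ℝ → ℝ) (hQ : ∀ u, Q u = (μ (Set.Iic u)).toReal)
    (P : ℝ → ℝ) (hPm : Measurable P) (hP01 : ∀ u, P u ∈ Set.Icc (0:ℝ) 1)
    (h : ℝ → ℝ) (hh : ∀ x, h x = if c < x then 1 / (1 - c)^2 else 1 / c^2) :
    (∫ u, (∫ y, (if y ≤ u then ((1 - c)^2 - (1 - P u)^2) * h (P u)
        else (c^2 - (P u)^2) * h (P u)) ∂μ) ∂G)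
      ≤ (∫ u, (∫ y, (if y ≤ u then ((1 - c)^2 - (1 - Q u)^2) * h (Q u)
        else (c^2 - (Q u)^2) * h (Q u)) ∂μ) ∂G) := by
  obtain ⟨hc0, hc1⟩ := hc
  -- properties of Q
  have hQ01 : ∀ u, Q u ∈ Set.Icc (0:ℝ) 1 := by
    intro u
    rw [hQ u]
    refine ⟨ENNReal.toReal_nonneg, ?_⟩
    have h1 : μ (Set.Iic u) ≤ 1 := prob_le_one
    calc (μ (Set.Iic u)).toReal ≤ (1:ℝ≥0∞).toReal :=
          ENNReal.toReal_mono (by norm_num) h1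
      _ = 1 := by norm_num
  have hQmono : Monotone Q := by
    intro a b hab
    rw [hQ a, hQ b]
    exact ENNReal.toReal_mono (measure_ne_top μ _)
      (measure_mono (Set.Iic_subset_Iic.mpr hab))
  have hQmeas : Measurable Q := hQmono.measurable
  -- rewrite the inner integrals
  have hinnerP : ∀ u, (∫ y, (if y ≤ u then ((1 - c)^2 - (1 - P u)^2) * h (P u)
      else (c^2 - (P u)^2) * h (P u)) ∂μ)
      = ((1-c)^2 - (1-P u)^2) * (if c < P u then 1/(1-c)^2 else 1/c^2) * Q u
        + (c^2 - (P u)^2) * (if c < P u then 1/(1-c)^2 else 1/c^2) * (1 - Q u) := by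
    intro u
    rw [tacps_inner, ← hQ u, hh (P u)]
  have hinnerQ : ∀ u, (∫ y, (if y ≤ u then ((1 - c)^2 - (1 - Q u)^2) * h (Q u)
      else (c^2 - (Q u)^2) * h (Q u)) ∂μ)
      = ((1-c)^2 - (1-Q u)^2) * (if c < Q u then 1/(1-c)^2 else 1/c^2) * Q u
        + (c^2 - (Q u)^2) * (if c < Q u then 1/(1-c)^2 else 1/c^2) * (1 - Q u) := by
    intro u
    rw [tacps_inner, ← hQ u, hh (Q u)]
  rw [integral_congr_ae (ae_of_all _ hinnerP), integral_congr_ae (ae_of_all _ hinnerQ)]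
  exact integral_mono
    (tacps_integrable c hc0 hc1 G P Q hPm hQmeas hP01 hQ01)
    (tacps_integrable c hc0 hc1 G Q Q hQmeas hQmeas hQ01 hQ01)
    (fun u => tacps_key c (Q u) (P u) hc0 hc1 (hQ01 u).1 (hQ01 u).2
      (hP01 u).1 (hP01 u).2)
end

section
/- For c ∈ (0,1) and fixed q ∈ (0,1), the map p ↦ ((q-c)² - (q-p)²)/w(p) with w(p) = (1-c)² for p > c and w(p) = c² for p ≤ c is nondecreasing on [0, q] and nonincreasing on [q, 1]. -/
/-- The expected Winkler asymmetric quadratic score, as a function of the forecast `p`,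
is nondecreasing on `[0, q]` and nonincreasing on `[q, 1]`. -/
theorem winkler_monotone_towards_truth (c q : ℝ) (hc : c ∈ Set.Ioo (0:ℝ) 1)
    (hq : q ∈ Set.Ioo (0:ℝ) 1) (f : ℝ → ℝ)
    (hf : ∀ p, f p = ((q - c)^2 - (q - p)^2) / (if c < p then (1 - c)^2 else c^2)) :
    MonotoneOn f (Set.Icc 0 q) ∧ AntitoneOn f (Set.Icc q 1) := by
  obtain ⟨hc0, hc1⟩ := hc
  obtain ⟨hq0, hq1⟩ := hq
  have hcsq : (0:ℝ) < c^2 := by positivity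
  have h1csq : (0:ℝ) < (1-c)^2 := by nlinarith
  constructor
  · intro p1 hp1 p2 hp2 h12
    rw [hf, hf]
    obtain ⟨hp10, hp1q⟩ := hp1
    obtain ⟨hp20, hp2q⟩ := hp2
    by_cases h1 : c < p1
    · have h2 : c < p2 := lt_of_lt_of_le h1 h12
      rw [if_pos h1, if_pos h2]
      apply div_le_div_of_nonneg_right ?_ h1csq.le <;> nlinarith
    · by_cases h2 : c < p2
      · rw [if_neg h1, if_pos h2]
        push_neg at h1
        have : ((q - c)^2 - (q - p1)^2) / c^2 ≤ 0 := by
          apply div_nonpos_of_nonpos_of_nonneg ?_ hcsq.le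
          nlinarith
        have h2' : (0:ℝ) ≤ ((q - c)^2 - (q - p2)^2) / (1-c)^2 := by
          apply div_nonneg ?_ h1csq.le
          nlinarith
        linarith
      · rw [if_neg h1, if_neg h2]
        push_neg at h1 h2
        apply div_le_div_of_nonneg_right ?_ hcsq.le <;> nlinarith
  · intro p1 hp1 p2 hp2 h12
    rw [hf, hf]
    obtain ⟨hp1q, hp11⟩ := hp1
    obtain ⟨hp2q, hp21⟩ := hp2
    by_cases h1 : c < p1
    · have h2 : c < p2 := lt_of_lt_of_le h1 h12
      rw [if_pos h1, if_pos h2]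
      apply div_le_div_of_nonneg_right ?_ h1csq.le <;> nlinarith
    · by_cases h2 : c < p2
      · rw [if_neg h1, if_pos h2]
        push_neg at h1
        have ha : ((q - c)^2 - (q - p2)^2) / (1-c)^2 ≤ 0 := by
          apply div_nonpos_of_nonpos_of_nonneg ?_ h1csq.le
          nlinarith
        have hb : (0:ℝ) ≤ ((q - c)^2 - (q - p1)^2) / c^2 := by
          apply div_nonneg ?_ hcsq.le
          nlinarith
        linarith
      · rw [if_neg h1, if_neg h2]
        push_neg at h1 h2
        apply div_le_div_of_nonneg_right ?_ hcsq.le <;> nlinarith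
end
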